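/- arXiv:2302.06931 — 3 statements merged into one kernel-verified Lean document; each statement's English description precedes it below -/
import Mathlib

section
/- For any x₁, x₂, x₃ ∈ {−1, 1}, the identity (6 + x₁ + x₃ − x₁x₂ + x₂x₃)/4 = 1 + [(2 + x₁ + x₃ − x₁x₂ + x₂x₃)² + (−x₁ + 2x₂ + x₃ + x₁x₂ + x₂x₃)²]/32 holds. -/
/-- Base-case sum-of-squares certificate: for `x₁, x₂, x₃ ∈ {−1,1}`,
`(6 + x₁ + x₃ − x₁x₂ + x₂x₃)/4
  = 1 + [(2 + x₁ + x₃ − x₁x₂ + x₂x₃)² + (−x₁ + 2x₂ + x₃ + x₁x₂ + x₂x₃)²]/32`. -/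
theorem sos_base_case (x₁ x₂ x₃ : ℝ)
    (h₁ : x₁ = 1 ∨ x₁ = -1) (h₂ : x₂ = 1 ∨ x₂ = -1) (h₃ : x₃ = 1 ∨ x₃ = -1) :
    (6 + x₁ + x₃ - x₁ * x₂ + x₂ * x₃) / 4 =
      1 + ((2 + x₁ + x₃ - x₁ * x₂ + x₂ * x₃) ^ 2 +
        (-x₁ + 2 * x₂ + x₃ + x₁ * x₂ + x₂ * x₃) ^ 2) / 32 := by
  rcases h₁ with rfl|rfl <;> rcases h₂ with rfl|rfl <;> rcases h₃ with rfl|rfl <;> norm_num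
end

section
/- For every k ≥ 3, the minimum over x ∈ {−1,1}^k of F_{φ_k}(x) equals 1, where F_{φ_k} counts the unsatisfied clauses of the proposition φ_k = ¬x₁ ∧ (x₁ ∨ ¬x₂) ∧ (x₂ ∨ x₃) ∧ (¬x₃ ∨ x₄) ∧ … ∧ (¬x_{k−1} ∨ x_k) ∧ ¬x_k (for k = 3: ¬x₁ ∧ (x₁ ∨ ¬x₂) ∧ (x₂ ∨ x₃) ∧ ¬x₃); moreover the all-(−1) assignment achieves this minimum. -/
/-- The number of clauses of the chain proposition
`φ_k = ¬x₁ ∧ (x₁ ∨ ¬x₂) ∧ (x₂ ∨ x₃) ∧ (¬x₃ ∨ x₄) ∧ … ∧ (¬x_{k−1} ∨ x_k) ∧ ¬x_k`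
left unsatisfied by the `{−1,1}`-assignment `x` (with `1` = true). -/
noncomputable def chainUnsat (k : ℕ) (x : ℕ → ℝ) : ℕ :=
  (if x 1 = -1 then 0 else 1) +
  (if x 1 = 1 ∨ x 2 = -1 then 0 else 1) +
  (if x 2 = 1 ∨ x 3 = 1 then 0 else 1) +
  (∑ j ∈ Finset.Ico 3 k, if x j = -1 ∨ x (j + 1) = 1 then 0 else 1) +
  (if x k = -1 then 0 else 1)

/-- For every `k ≥ 3`, the minimum over `x ∈ {−1,1}^k` of `F_{φ_k}(x)` equals `1`,
and the all-`(−1)` assignment achieves this minimum. -/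
theorem chain_min_one (k : ℕ) (hk : 3 ≤ k) :
    (∀ x : ℕ → ℝ, (∀ i, 1 ≤ i → i ≤ k → x i = 1 ∨ x i = -1) → 1 ≤ chainUnsat k x) ∧
      chainUnsat k (fun _ => -1) = 1 := by
  constructor
  · intro x hx
    by_contra h
    push_neg at h
    have h0 : chainUnsat k x = 0 := by omega
    unfold chainUnsat at h0
    have hA : (if x 1 = -1 then (0:ℕ) else 1) = 0 ∧
        (if x 1 = 1 ∨ x 2 = -1 then (0:ℕ) else 1) = 0 ∧
        (if x 2 = 1 ∨ x 3 = 1 then (0:ℕ) else 1) = 0 ∧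
        (∑ j ∈ Finset.Ico 3 k, if x j = -1 ∨ x (j + 1) = 1 then (0:ℕ) else 1) = 0 ∧
        (if x k = -1 then (0:ℕ) else 1) = 0 := by omega
    obtain ⟨h1, h2, h3, h4, h5⟩ := hA
    have hx1 : x 1 = -1 := by by_contra hc; simp [hc] at h1
    have hx2 : x 2 = -1 := by
      by_contra hc
      have hx1' : x 1 ≠ 1 := by rw [hx1]; norm_num
      simp [hc, hx1'] at h2
    have hx3 : x 3 = 1 := by
      by_contra hc
      have hx2' : x 2 ≠ 1 := by rw [hx2]; norm_num
      simp [hc, hx2'] at h3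
    have hchain : ∀ j ∈ Finset.Ico 3 k, x j = -1 ∨ x (j + 1) = 1 := by
      intro j hj
      by_contra hc
      have := (Finset.sum_eq_zero_iff).mp h4 j hj
      simp [hc] at this
    have hall : ∀ j, 3 ≤ j → j ≤ k → x j = 1 := by
      intro j
      induction j with
      | zero => omega
      | succ n ih =>
        intro h3n hnk
        rcases Nat.lt_or_ge 3 (n+1) with hlt | hle
        · have hn3 : 3 ≤ n := by omega
          have hn1 : x n = 1 := ih hn3 (by omega)
          have := hchain n (Finset.mem_Ico.mpr ⟨hn3, by omega⟩)
          rcases this with h | h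
          · rw [hn1] at h; norm_num at h
          · exact h
        · have : n + 1 = 3 := by omega
          rw [this]; exact hx3
    have hxk : x k = 1 := hall k hk le_rfl
    rw [hxk] at h5
    norm_num at h5
  · unfold chainUnsat
    norm_num
end

section
/- For every k ≥ 3, the polynomial F_{φ_k} − 1 admits a sum-of-squares decomposition modulo the ideal I = ⟨1 − x₁², …, 1 − x_k²⟩, where all monomials appearing in the squared polynomials are among 1, the x_i, and products x_i x_j of variables appearing together in a clause of φ_k. -/
open MvPolynomial

/-- The polynomial `F_{φ_k}` counting unsatisfied clauses of the chain proposition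
`φ_k = ¬x₁ ∧ (x₁ ∨ ¬x₂) ∧ (x₂ ∨ x₃) ∧ (¬x₃ ∨ x₄) ∧ … ∧ (¬x_{k−1} ∨ x_k) ∧ ¬x_k`. -/
noncomputable def chainPoly (k : ℕ) : MvPolynomial ℕ ℝ :=
  MvPolynomial.C (1 / 2 : ℝ) * (1 + X 1) +
  MvPolynomial.C (1 / 4 : ℝ) * (1 - X 1) * (1 + X 2) +
  MvPolynomial.C (1 / 4 : ℝ) * (1 - X 2) * (1 - X 3) +
  (∑ j ∈ Finset.Ico 3 k, MvPolynomial.C (1 / 4 : ℝ) * (1 + X j) * (1 - X (j + 1))) +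
  MvPolynomial.C (1 / 2 : ℝ) * (1 + X k)

noncomputable def gpoly (j : ℕ) : MvPolynomial ℕ ℝ :=
  if j = 1 then C (1/4 : ℝ) * (1 + X 1) * (1 - X 2)
  else if j = 2 then C (1/4 : ℝ) * (1 + X 2) * (1 + X 3)
  else if 3 ≤ j then C (1/4 : ℝ) * (1 - X j) * (1 + X (j+1))
  else 0

lemma gpoly_one : gpoly 1 = C (1/4 : ℝ) * (1 + X 1) * (1 - X 2) := by
  unfold gpoly; rw [if_pos rfl]

lemma gpoly_two : gpoly 2 = C (1/4 : ℝ) * (1 + X 2) * (1 + X 3) := by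
  unfold gpoly; rw [if_neg (by omega : ¬(2=1)), if_pos rfl]

lemma gpoly_of_ge (j : ℕ) (hj : 3 ≤ j) :
    gpoly j = C (1/4 : ℝ) * (1 - X j) * (1 + X (j+1)) := by
  unfold gpoly
  rw [if_neg (by omega), if_neg (by omega), if_pos hj]

lemma hC4 : (4 : MvPolynomial ℕ ℝ) * C (1/4 : ℝ) = 1 := by
  rw [show (4 : MvPolynomial ℕ ℝ) = C (4:ℝ) from (map_ofNat C 4).symm, ← C_mul]
  norm_num

lemma hC2 : (C (1/2 : ℝ) : MvPolynomial ℕ ℝ) = 2 * C (1/4 : ℝ) := by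
  rw [show (2 : MvPolynomial ℕ ℝ) = C (2:ℝ) from (map_ofNat C 2).symm, ← C_mul]
  norm_num

/-- key algebraic identity for idempotent-like squares -/
lemma sq_identity (s t : MvPolynomial ℕ ℝ) :
    (C (1/4 : ℝ) * (1 + s) * (1 + t)) - (C (1/4 : ℝ) * (1 + s) * (1 + t))^2 =
      (1 - s^2) * (2 * (C (1/4:ℝ))^2 * (1 + t) - (C (1/4:ℝ))^2 * (1 - t^2)) +
      (1 - t^2) * (2 * (C (1/4:ℝ))^2 * (1 + s)) := by
  have h := hC4
  linear_combination (- (C (1/4:ℝ) * (1 + s) * (1 + t))) * h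

lemma mem_aux (k i j : ℕ) (hi1 : 1 ≤ i) (hik : i ≤ k) (hj1 : 1 ≤ j) (hjk : j ≤ k)
    (s t : MvPolynomial ℕ ℝ) (hs : s^2 = (X i)^2) (ht : t^2 = (X j)^2) :
    (C (1/4 : ℝ) * (1 + s) * (1 + t)) - (C (1/4 : ℝ) * (1 + s) * (1 + t))^2 ∈
      Ideal.span {p : MvPolynomial ℕ ℝ | ∃ i, 1 ≤ i ∧ i ≤ k ∧ p = 1 - (X i) ^ 2} := by
  rw [sq_identity, hs, ht]
  exact Ideal.add_mem _
    (Ideal.mul_mem_right _ _ (Ideal.subset_span ⟨i, hi1, hik, rfl⟩))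
    (Ideal.mul_mem_right _ _ (Ideal.subset_span ⟨j, hj1, hjk, rfl⟩))

lemma support_pair (a b c d : ℝ) (i j : ℕ) :
    (C a + C b * X i + C c * X j + C d * (X i * X j) : MvPolynomial ℕ ℝ).support ⊆
      {0, Finsupp.single i 1, Finsupp.single j 1, Finsupp.single i 1 + Finsupp.single j 1} := by
  classical
  have h1 : (C a : MvPolynomial ℕ ℝ).support ⊆ {(0 : ℕ →₀ ℕ)} := support_monomial_subset
  have h2 : (C b * X i : MvPolynomial ℕ ℝ).support ⊆ {Finsupp.single i 1} := by
    rw [C_mul_X_eq_monomial]; exact support_monomial_subset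
  have h3 : (C c * X j : MvPolynomial ℕ ℝ).support ⊆ {Finsupp.single j 1} := by
    rw [C_mul_X_eq_monomial]; exact support_monomial_subset
  have h4 : (C d * (X i * X j) : MvPolynomial ℕ ℝ).support ⊆
      {Finsupp.single i 1 + Finsupp.single j 1} := by
    have : (C d * (X i * X j) : MvPolynomial ℕ ℝ) =
        monomial (Finsupp.single i 1 + Finsupp.single j 1) d := by
      rw [X, X, monomial_mul, one_mul, C_mul_monomial, mul_one]
    rw [this]; exact support_monomial_subset
  intro m hm
  simp only [Finset.mem_insert, Finset.mem_singleton]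
  rcases Finset.mem_union.mp (support_add hm) with hm | hm
  · rcases Finset.mem_union.mp (support_add hm) with hm | hm
    · rcases Finset.mem_union.mp (support_add hm) with hm | hm
      · exact Or.inl (Finset.mem_singleton.mp (h1 hm))
      · exact Or.inr (Or.inl (Finset.mem_singleton.mp (h2 hm)))
    · exact Or.inr (Or.inr (Or.inl (Finset.mem_singleton.mp (h3 hm))))
  · exact Or.inr (Or.inr (Or.inr (Finset.mem_singleton.mp (h4 hm))))

/-- For every `k ≥ 3`, `F_{φ_k} − 1` is a sum of squares modulo the ideal
`I = ⟨1 − x₁², …, 1 − x_k²⟩`, where every monomial appearing in the squared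
polynomials lies in the `SOS_p` basis of `φ_k` (the constant, the variables
`x₁,…,x_k`, and the products `x_i x_{i+1}` of variables appearing together in a
clause of `φ_k`). -/
theorem chain_sos (k : ℕ) (hk : 3 ≤ k) :
    ∃ (s : ℕ) (f : Fin s → MvPolynomial ℕ ℝ),
      (∀ j : Fin s, ∀ d ∈ (f j).support,
        d = 0 ∨ (∃ i, 1 ≤ i ∧ i ≤ k ∧ d = Finsupp.single i 1) ∨
          (∃ i, 1 ≤ i ∧ i + 1 ≤ k ∧
            d = Finsupp.single i 1 + Finsupp.single (i + 1) 1)) ∧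
      chainPoly k - 1 - ∑ j : Fin s, (f j) ^ 2 ∈
        Ideal.span {p : MvPolynomial ℕ ℝ | ∃ i, 1 ≤ i ∧ i ≤ k ∧ p = 1 - (X i) ^ 2} := by
  classical
  refine ⟨k, fun j => gpoly j, ?_, ?_⟩
  · -- support condition
    rintro ⟨j, hjk⟩ d hd
    simp only at hd
    by_cases h1 : j = 1
    · subst h1
      have hg : gpoly 1 = C (1/4:ℝ) + C (1/4:ℝ) * X 1 + C (-(1/4):ℝ) * X 2 +
          C (-(1/4):ℝ) * (X 1 * X 2) := by
        rw [gpoly_one]; simp only [map_neg]; ring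
      rw [hg] at hd
      have := support_pair _ _ _ _ 1 2 hd
      simp only [Finset.mem_insert, Finset.mem_singleton] at this
      rcases this with h | h | h | h
      · exact Or.inl h
      · exact Or.inr (Or.inl ⟨1, le_refl _, by omega, h⟩)
      · exact Or.inr (Or.inl ⟨2, by omega, by omega, h⟩)
      · exact Or.inr (Or.inr ⟨1, le_refl _, by omega, h⟩)
    by_cases h2 : j = 2
    · subst h2
      have hg : gpoly 2 = C (1/4:ℝ) + C (1/4:ℝ) * X 2 + C (1/4:ℝ) * X 3 +
          C (1/4:ℝ) * (X 2 * X 3) := by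
        rw [gpoly_two]; ring
      rw [hg] at hd
      have := support_pair _ _ _ _ 2 3 hd
      simp only [Finset.mem_insert, Finset.mem_singleton] at this
      rcases this with h | h | h | h
      · exact Or.inl h
      · exact Or.inr (Or.inl ⟨2, by omega, by omega, h⟩)
      · exact Or.inr (Or.inl ⟨3, by omega, by omega, h⟩)
      · exact Or.inr (Or.inr ⟨2, by omega, by omega, h⟩)
    by_cases h3 : 3 ≤ j
    · have hg : gpoly j = C (1/4:ℝ) + C (-(1/4):ℝ) * X j + C (1/4:ℝ) * X (j+1) +
          C (-(1/4):ℝ) * (X j * X (j+1)) := by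
        rw [gpoly_of_ge j h3]; simp only [map_neg]; ring
      rw [hg] at hd
      have := support_pair _ _ _ _ j (j+1) hd
      simp only [Finset.mem_insert, Finset.mem_singleton] at this
      rcases this with h | h | h | h
      · exact Or.inl h
      · exact Or.inr (Or.inl ⟨j, by omega, by omega, h⟩)
      · exact Or.inr (Or.inl ⟨j+1, by omega, by omega, h⟩)
      · exact Or.inr (Or.inr ⟨j, by omega, by omega, h⟩)
    · have hj0 : gpoly j = 0 := by
        unfold gpoly; rw [if_neg h1, if_neg h2, if_neg h3]
      rw [hj0] at hd
      simp at hd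
  · -- ideal membership
    have hsplit : ∑ j : Fin k, (gpoly (j:ℕ))^2 =
        (gpoly 1)^2 + (gpoly 2)^2 + ∑ j ∈ Finset.Ico 3 k, (gpoly j)^2 := by
      rw [Fin.sum_univ_eq_sum_range (fun j => (gpoly j)^2) k]
      rw [Finset.range_eq_Ico,
        ← Finset.sum_Ico_consecutive (fun j => (gpoly j)^2) (by omega : (0:ℕ) ≤ 3) hk]
      congr 1
      have h03 : Finset.Ico 0 3 = Finset.range 3 := by rw [Finset.range_eq_Ico]
      rw [h03, Finset.sum_range_succ, Finset.sum_range_succ, Finset.sum_range_one]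
      have h0 : gpoly 0 = 0 := by unfold gpoly; norm_num
      rw [h0]
      ring
    have htel : ∑ j ∈ Finset.Ico 3 k,
        (MvPolynomial.C (1 / 4 : ℝ) * (1 + X j) * (1 - X (j + 1)) - gpoly j) =
        C (1/2 : ℝ) * X 3 - C (1/2 : ℝ) * X k := by
      have hterm : ∀ j ∈ Finset.Ico 3 k,
          MvPolynomial.C (1 / 4 : ℝ) * (1 + X j) * (1 - X (j + 1)) - gpoly j =
          (2 * C (1/4 : ℝ) * X j) - (2 * C (1/4 : ℝ) * X (j+1)) := by
        intro j hj
        rw [gpoly_of_ge j (Finset.mem_Ico.mp hj).1]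
        ring
      rw [Finset.sum_congr rfl hterm, Finset.sum_Ico_eq_sum_range]
      refine (Finset.sum_range_sub'
        (fun n => (2 * C (1/4:ℝ) * X (3+n) : MvPolynomial ℕ ℝ)) (k-3)).trans ?_
      show (2 * C (1/4:ℝ) * X (3+0) : MvPolynomial ℕ ℝ) - 2 * C (1/4:ℝ) * X (3+(k-3)) = _
      rw [hC2, show 3+(k-3) = k from by omega]
    have hB : gpoly 1 + gpoly 2 + ∑ j ∈ Finset.Ico 3 k, gpoly j = chainPoly k - 1 := by
      have hsum : ∑ j ∈ Finset.Ico 3 k, gpoly j =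
          (∑ j ∈ Finset.Ico 3 k, MvPolynomial.C (1 / 4 : ℝ) * (1 + X j) * (1 - X (j + 1)))
          - (C (1/2 : ℝ) * X 3 - C (1/2 : ℝ) * X k) := by
        rw [← htel, Finset.sum_sub_distrib]
        ring
      rw [gpoly_one, gpoly_two, hsum, chainPoly, hC2]
      have h := hC4
      linear_combination - h
    have key : chainPoly k - 1 - ∑ j : Fin k, (gpoly (j:ℕ))^2 =
        (gpoly 1 - (gpoly 1)^2) + (gpoly 2 - (gpoly 2)^2) +
        ∑ j ∈ Finset.Ico 3 k, (gpoly j - (gpoly j)^2) := by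
      rw [hsplit, ← hB, Finset.sum_sub_distrib]
      ring
    rw [key]
    have m1 : gpoly 1 - (gpoly 1)^2 ∈
        Ideal.span {p : MvPolynomial ℕ ℝ | ∃ i, 1 ≤ i ∧ i ≤ k ∧ p = 1 - (X i) ^ 2} := by
      have hg1 : gpoly 1 = C (1/4 : ℝ) * (1 + X 1) * (1 + (- X 2)) := by
        rw [gpoly_one]; ring
      rw [hg1]
      exact mem_aux k 1 2 (by omega) (by omega) (by omega) (by omega) (X 1) (- X 2) rfl (by ring)
    have m2 : gpoly 2 - (gpoly 2)^2 ∈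
        Ideal.span {p : MvPolynomial ℕ ℝ | ∃ i, 1 ≤ i ∧ i ≤ k ∧ p = 1 - (X i) ^ 2} := by
      rw [gpoly_two]
      exact mem_aux k 2 3 (by omega) (by omega) (by omega) (by omega) (X 2) (X 3) rfl rfl
    refine Ideal.add_mem _ (Ideal.add_mem _ m1 m2) (Ideal.sum_mem _ ?_)
    intro j hj
    obtain ⟨hj3, hjk⟩ := Finset.mem_Ico.mp hj
    have hg : gpoly j = C (1/4 : ℝ) * (1 + (- X j)) * (1 + X (j+1)) := by
      rw [gpoly_of_ge j hj3]; ring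
    rw [hg]
    exact mem_aux k j (j+1) (by omega) (by omega) (by omega) (by omega) (- X j) (X (j+1))
      (by ring) rfl
end
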